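/- Let (α,x̄) be a morphism of D_m from x̄ to ȳ, where x ∈ {0,…,m−1} is the representative of x̄. Then the factorizations of (α,x̄) in D_m are in bijection with the integers γ satisfying x ≤ γ ≤ α: a pair of composable morphisms ((β,z̄),(γ,x̄)) satisfies (β,z̄)·(γ,x̄) = (α,x̄) if and only if x ≤ γ ≤ α, z̄ = γ̄ (the residue class of γ mod m), and β = α − γ + z, where z ∈ {0,…,m−1} is the representative of z̄. In particular, the morphism (α,x̄) has exactly α − x + 1 factorizations. -/
import Mathlib


/-- A (potential) morphism `(α, x̄)` of the category `D_m`: it goes from the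
object `x̄` to the object `ᾱ` (the unique `ȳ` with `α ≡ y (mod m)`). -/
structure DmMor (m : ℕ) where
  a : ℤ
  x : ZMod m
deriving DecidableEq

/-- `(α, x̄)` really is a morphism of `D_m`: `α ≥ x`, where `x ∈ {0,…,m-1}` is
the canonical representative of `x̄`. -/
def DmValid (m : ℕ) (f : DmMor m) : Prop := (f.x.val : ℤ) ≤ f.a

/-- The target object of a morphism `(α, x̄)` of `D_m`: the residue class of `α`. -/
def DmTgt (m : ℕ) (f : DmMor m) : ZMod m := (f.a : ZMod m)

/-- `g` may be composed after `f` (target of `f` = source of `g`). -/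
def DmComposable (m : ℕ) (f g : DmMor m) : Prop := g.x = (f.a : ZMod m)

/-- The composite `g ∘ f` in `D_m`: `(β, ȳ) ∘ (α, x̄) = (β - y + α, x̄)`, where
`y ∈ {0,…,m-1}` is the canonical representative of `ȳ`. -/
def DmComp (m : ℕ) (g f : DmMor m) : DmMor m :=
  ⟨g.a - (g.x.val : ℤ) + f.a, f.x⟩

/-- The identity morphism `(x, x̄)` of the object `x̄` of `D_m`, where
`x ∈ {0,…,m-1}` is the canonical representative of `x̄`. -/
def DmId (m : ℕ) (x : ZMod m) : DmMor m := ⟨(x.val : ℤ), x⟩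

/-- Factorizations of a morphism `(α, x̄)` of `D_m` are in bijection with the
integers `γ` with `x ≤ γ ≤ α`: a pair of composable morphisms
`((β, z̄), (γ, x̄))` composes to `(α, x̄)` iff `x ≤ γ ≤ α`, `z̄ = γ̄` and
`β = α - γ + z` (with `z ∈ {0,…,m-1}` the canonical representative of `z̄`).
In particular `(α, x̄)` has exactly `α - x + 1` factorizations. -/
theorem stmt13 (m : ℕ) (hm : 1 < m) (α : ℤ) (x : ZMod m)
    (hf : DmValid m ⟨α, x⟩) :
    (∀ (β γ : ℤ) (z : ZMod m),
      (DmValid m ⟨γ, x⟩ ∧ DmValid m ⟨β, z⟩ ∧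
        DmComposable m ⟨γ, x⟩ ⟨β, z⟩ ∧ DmComp m ⟨β, z⟩ ⟨γ, x⟩ = ⟨α, x⟩) ↔
      ((x.val : ℤ) ≤ γ ∧ γ ≤ α ∧ z = (γ : ZMod m) ∧
        β = α - γ + (z.val : ℤ))) ∧
    (({p : DmMor m × DmMor m | DmValid m p.1 ∧ DmValid m p.2 ∧
        DmComposable m p.2 p.1 ∧ DmComp m p.1 p.2 = ⟨α, x⟩}.ncard : ℤ)
      = α - (x.val : ℤ) + 1) := by
  have key : ∀ (β γ : ℤ) (z : ZMod m),
      (DmValid m ⟨γ, x⟩ ∧ DmValid m ⟨β, z⟩ ∧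
        DmComposable m ⟨γ, x⟩ ⟨β, z⟩ ∧ DmComp m ⟨β, z⟩ ⟨γ, x⟩ = ⟨α, x⟩) ↔
      ((x.val : ℤ) ≤ γ ∧ γ ≤ α ∧ z = (γ : ZMod m) ∧
        β = α - γ + (z.val : ℤ)) := by
    intro β γ z
    constructor
    · rintro ⟨h1, h2, h3, h4⟩
      simp only [DmValid, DmComposable, DmComp, DmMor.mk.injEq] at h1 h2 h3 h4
      obtain ⟨h4, -⟩ := h4
      refine ⟨h1, ?_, h3, by linarith⟩
      linarith
    · rintro ⟨h1, h2, h3, h4⟩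
      simp only [DmValid, DmComposable, DmComp, DmMor.mk.injEq]
      refine ⟨h1, ?_, h3, by linarith, trivial⟩
      simp only [h4]; linarith
  refine ⟨key, ?_⟩
  have hset : {p : DmMor m × DmMor m | DmValid m p.1 ∧ DmValid m p.2 ∧
        DmComposable m p.2 p.1 ∧ DmComp m p.1 p.2 = ⟨α, x⟩}
      = (fun γ : ℤ => (⟨α - γ + (((γ : ZMod m)).val : ℤ), (γ : ZMod m)⟩,
          (⟨γ, x⟩ : DmMor m))) '' Set.Icc (x.val : ℤ) α := by
    ext ⟨⟨βa, za⟩, ⟨γa, xa⟩⟩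
    simp only [Set.mem_setOf_eq, Set.mem_image, Set.mem_Icc, Prod.mk.injEq]
    constructor
    · rintro ⟨h1, h2, h3, h4⟩
      have hx : xa = x := congrArg DmMor.x h4
      subst hx
      obtain ⟨ha, hb, hc, hd⟩ := (key βa γa za).mp ⟨h2, h1, h3, h4⟩
      exact ⟨γa, ⟨ha, hb⟩, by rw [hd, hc], rfl⟩
    · rintro ⟨γ, ⟨ha, hb⟩, hg, hf'⟩
      have := (key (α - γ + (((γ : ZMod m)).val : ℤ)) γ (γ : ZMod m)).mpr
        ⟨ha, hb, rfl, rfl⟩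
      obtain ⟨h1, h2, h3, h4⟩ := this
      injection hg with e1 e2
      injection hf' with e3 e4
      subst e1 e2 e3 e4
      exact ⟨h2, h1, h3, h4⟩
  rw [hset]
  rw [Set.ncard_image_of_injective _ (fun a b hab => congrArg (fun p : DmMor m × DmMor m => p.2.a) hab)]
  have hle : (x.val : ℤ) ≤ α := hf
  rw [← Finset.coe_Icc, Set.ncard_coe_finset, Int.card_Icc]
  omega
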